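/- Let p ∈ (1,2), a, b positive definite m×m matrices. Then (1/2)tr(a^p) + (1/2)tr(b^p) − tr(((a+b)/2)^p) ≤ (1/4)·tr[(a − b)(a^{p−1} − b^{p−1})]. -/

import Mathlib

/-!
Write `s = p - 1 ∈ (0, 1)` and `c = (a + b) / 2`. Since `a * a^s = a^p`, expanding the right-hand
side reduces the claim to `tr (c a^s) + tr (c b^s) ≤ 2 tr (c^p)`. In an orthonormal eigenbasis
`(u_k)` of `c` with eigenvalues `γ_k ≥ 0` one has `tr (c X) = ∑ γ_k ⟨u_k, X u_k⟩`. Jensen's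
inequality for the concave function `x ↦ x^s`, applied to the spectral distribution of `a` in the
unit vector `u_k`, gives `⟨u_k, a^s u_k⟩ ≤ ⟨u_k, a u_k⟩^s`, and concavity once more gives
`⟨u_k, a u_k⟩^s + ⟨u_k, b u_k⟩^s ≤ 2 γ_k^s`, because `⟨u_k, a u_k⟩` and `⟨u_k, b u_k⟩` average
to `γ_k`.
-/

open Matrix
open scoped ComplexOrder

noncomputable def mpow {m : ℕ} (A : Matrix (Fin m) (Fin m) ℂ) (q : ℝ) :
    Matrix (Fin m) (Fin m) ℂ :=
  cfc (fun x : ℝ => x ^ q) A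

variable {𝕜 : Type*} [RCLike 𝕜] {n : Type*} [Fintype n] [DecidableEq n]

namespace Matrix.IsHermitian

variable {A : Matrix n n 𝕜} (hA : A.IsHermitian)
include hA

lemma re_dotProduct_cfc_mulVec (f : ℝ → ℝ) (v : n → 𝕜) :
    RCLike.re (star v ⬝ᵥ cfc f A *ᵥ v) =
      ∑ j, ‖(star (hA.eigenvectorUnitary : Matrix n n 𝕜) *ᵥ v) j‖ ^ 2 * f (hA.eigenvalues j) := by
  rw [hA.cfc_eq, IsHermitian.cfc, Unitary.conjStarAlgAut_apply, ← mulVec_mulVec, ← mulVec_mulVec,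
    dotProduct_mulVec, star_eq_conjTranspose,
    ← conjTranspose_conjTranspose (hA.eigenvectorUnitary : Matrix n n 𝕜), ← star_mulVec,
    conjTranspose_conjTranspose]
  simp only [dotProduct, mulVec_diagonal, Pi.star_apply, RCLike.star_def, Function.comp_apply,
    map_sum]
  refine Finset.sum_congr rfl fun j _ => ?_
  rw [mul_left_comm, RCLike.conj_mul, mul_comm]
  norm_cast

lemma sum_norm_sq_star_eigenvectorUnitary_mulVec (v : n → 𝕜) :
    ∑ j, ‖(star (hA.eigenvectorUnitary : Matrix n n 𝕜) *ᵥ v) j‖ ^ 2 = RCLike.re (star v ⬝ᵥ v) := by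
  simpa [cfc_const_one ℝ A hA.isSelfAdjoint] using (hA.re_dotProduct_cfc_mulVec (fun _ => 1) v).symm

lemma re_dotProduct_mulVec (v : n → 𝕜) :
    RCLike.re (star v ⬝ᵥ A *ᵥ v) =
      ∑ j, ‖(star (hA.eigenvectorUnitary : Matrix n n 𝕜) *ᵥ v) j‖ ^ 2 * hA.eigenvalues j := by
  simpa [cfc_id ℝ A hA.isSelfAdjoint] using hA.re_dotProduct_cfc_mulVec id v

lemma re_dotProduct_mulVec_mem {S : Set ℝ} (hS : Convex ℝ S) (hAS : spectrum ℝ A ⊆ S)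
    {v : n → 𝕜} (hv : star v ⬝ᵥ v = 1) : RCLike.re (star v ⬝ᵥ A *ᵥ v) ∈ S := by
  rw [hA.re_dotProduct_mulVec]
  exact hS.sum_mem (fun j _ => by positivity)
    (by simp [hA.sum_norm_sq_star_eigenvectorUnitary_mulVec, hv])
    (fun j _ => hAS (hA.eigenvalues_mem_spectrum_real j))

theorem re_dotProduct_cfc_mulVec_le {S : Set ℝ} {f : ℝ → ℝ} (hf : ConcaveOn ℝ S f)
    (hAS : spectrum ℝ A ⊆ S) {v : n → 𝕜} (hv : star v ⬝ᵥ v = 1) :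
    RCLike.re (star v ⬝ᵥ cfc f A *ᵥ v) ≤ f (RCLike.re (star v ⬝ᵥ A *ᵥ v)) := by
  rw [hA.re_dotProduct_cfc_mulVec, hA.re_dotProduct_mulVec]
  exact hf.le_map_sum (fun j _ => by positivity)
    (by simp [hA.sum_norm_sq_star_eigenvectorUnitary_mulVec, hv])
    (fun j _ => hAS (hA.eigenvalues_mem_spectrum_real j))

lemma trace_mul_eq_sum (X : Matrix n n 𝕜) :
    (A * X).trace = ∑ k, (hA.eigenvalues k : 𝕜) *
      (star ⇑(hA.eigenvectorBasis k) ⬝ᵥ X *ᵥ ⇑(hA.eigenvectorBasis k)) := by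
  have hconj : (A * X).trace = (diagonal (RCLike.ofReal ∘ hA.eigenvalues) *
      (star (hA.eigenvectorUnitary : Matrix n n 𝕜) * X *
        (hA.eigenvectorUnitary : Matrix n n 𝕜))).trace := by
    conv_lhs => rw [hA.spectral_theorem, Unitary.conjStarAlgAut_apply]
    simp only [mul_assoc]
    rw [trace_mul_comm]
    simp only [mul_assoc]
  rw [hconj, trace, Fintype.sum_congr _ _ fun k => ?_]
  rw [diag_apply, diagonal_mul, mul_mul_apply, eigenvectorUnitary_transpose_apply]
  rfl

lemma re_trace_mul_eq_sum (X : Matrix n n 𝕜) :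
    RCLike.re (A * X).trace = ∑ k, hA.eigenvalues k *
      RCLike.re (star ⇑(hA.eigenvectorBasis k) ⬝ᵥ X *ᵥ ⇑(hA.eigenvectorBasis k)) := by
  simp [hA.trace_mul_eq_sum]

lemma star_eigenvectorBasis_dotProduct_self (k : n) :
    star ⇑(hA.eigenvectorBasis k) ⬝ᵥ ⇑(hA.eigenvectorBasis k) = 1 := by
  rw [dotProduct_comm, ← EuclideanSpace.inner_eq_star_dotProduct]
  simp [hA.eigenvectorBasis.orthonormal.1 k]

lemma re_dotProduct_cfc_mulVec_eigenvectorBasis (f : ℝ → ℝ) (k : n) :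
    RCLike.re (star ⇑(hA.eigenvectorBasis k) ⬝ᵥ cfc f A *ᵥ ⇑(hA.eigenvectorBasis k)) =
      f (hA.eigenvalues k) := by
  simp [hA.re_dotProduct_cfc_mulVec, star_eigenvectorUnitary_mulVec, Pi.single_apply, apply_ite]

end Matrix.IsHermitian

namespace Matrix.PosSemidef

lemma spectrum_subset_Ici {A : Matrix n n 𝕜} (hA : A.PosSemidef) :
    spectrum ℝ A ⊆ Set.Ici 0 := by
  rw [hA.1.spectrum_real_eq_range_eigenvalues]
  rintro _ ⟨i, rfl⟩
  exact hA.eigenvalues_nonneg i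

lemma mul_cfc_rpow {A : Matrix n n 𝕜} (hA : A.PosSemidef) {s : ℝ}
    (hs : s + 1 ≠ 0) : A * cfc (fun x : ℝ => x ^ s) A = cfc (fun x : ℝ => x ^ (s + 1)) A := by
  calc A * cfc (fun x : ℝ => x ^ s) A = cfc (fun x : ℝ => x) A * cfc (fun x : ℝ => x ^ s) A := by
        rw [cfc_id' ℝ A hA.1.isSelfAdjoint]
    _ = cfc (fun x : ℝ => x * x ^ s) A :=
        (cfc_mul _ _ A (hg := A.finite_real_spectrum.continuousOn _)).symm
    _ = cfc (fun x : ℝ => x ^ (s + 1)) A := cfc_congr fun x hx => by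
        rw [Real.rpow_add' (hA.spectrum_subset_Ici hx) hs, Real.rpow_one, mul_comm]

theorem re_trace_mul_cfc_add_le {S : Set ℝ} {f : ℝ → ℝ} (hf : ConcaveOn ℝ S f)
    {a b c : Matrix n n 𝕜} (ha : a.IsHermitian) (hb : b.IsHermitian) (hc : c.PosSemidef)
    (haS : spectrum ℝ a ⊆ S) (hbS : spectrum ℝ b ⊆ S) (habc : a + b = 2 • c) :
    RCLike.re (c * (cfc f a + cfc f b)).trace ≤ 2 * RCLike.re (c * cfc f c).trace := by
  rw [hc.1.re_trace_mul_eq_sum, hc.1.re_trace_mul_eq_sum, Finset.mul_sum]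
  refine Finset.sum_le_sum fun k _ => ?_
  set u := ⇑(hc.1.eigenvectorBasis k)
  have hu : star u ⬝ᵥ u = 1 := hc.1.star_eigenvectorBasis_dotProduct_self k
  set x := RCLike.re (star u ⬝ᵥ a *ᵥ u)
  set y := RCLike.re (star u ⬝ᵥ b *ᵥ u)
  have hxy : x + y = 2 * hc.1.eigenvalues k := by
    have hγ : RCLike.re (star u ⬝ᵥ c *ᵥ u) = hc.1.eigenvalues k := (hc.1.eigenvalues_eq k).symm
    have := congrArg (fun M => RCLike.re (star u ⬝ᵥ M *ᵥ u)) habc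
    simpa [add_mulVec, two_smul, hγ, two_mul] using this
  have hfx := ha.re_dotProduct_cfc_mulVec_le hf haS hu
  have hfy := hb.re_dotProduct_cfc_mulVec_le hf hbS hu
  have hmid : f x + f y ≤ 2 * f (hc.1.eigenvalues k) := by
    have := hf.2 (ha.re_dotProduct_mulVec_mem hf.1 haS hu) (hb.re_dotProduct_mulVec_mem hf.1 hbS hu)
      (by norm_num : (0 : ℝ) ≤ 1 / 2) (by norm_num : (0 : ℝ) ≤ 1 / 2) (by norm_num)
    simp only [smul_eq_mul] at this
    rw [show 1 / 2 * x + 1 / 2 * y = hc.1.eigenvalues k by linarith] at this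
    linarith
  rw [hc.1.re_dotProduct_cfc_mulVec_eigenvectorBasis, add_mulVec, dotProduct_add, map_add]
  nlinarith [hc.eigenvalues_nonneg k]

end Matrix.PosSemidef

/-- two-point matrix-valued Beckner inequality: for `p ∈ (1,2)` and positive
definite `a, b`,
`(1/2)tr(a^p) + (1/2)tr(b^p) − tr(((a+b)/2)^p) ≤ (1/4)·tr[(a − b)(a^{p−1} − b^{p−1})]`. -/
theorem two_point_matrix_beckner {m : ℕ} (p : ℝ) (hp : p ∈ Set.Ioo (1 : ℝ) 2)
    (a b : Matrix (Fin m) (Fin m) ℂ) (ha : a.PosDef) (hb : b.PosDef) :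
    (1 / 2) * (Matrix.trace (mpow a p)).re + (1 / 2) * (Matrix.trace (mpow b p)).re -
        (Matrix.trace (mpow (((1 / 2 : ℝ) : ℂ) • (a + b)) p)).re ≤
      (1 / 4) * (Matrix.trace ((a - b) * (mpow a (p - 1) - mpow b (p - 1)))).re := by
  obtain ⟨s, rfl⟩ : ∃ s, p = s + 1 := ⟨p - 1, by ring⟩
  obtain ⟨hs0, hs1⟩ : 0 < s ∧ s < 1 := by constructor <;> linarith [hp.1, hp.2]
  rw [add_sub_cancel_right]
  set c := ((1 / 2 : ℝ) : ℂ) • (a + b)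
  have habc : a + b = 2 • c := by
    rw [two_smul, ← add_smul, ← Complex.ofReal_add]; norm_num
  have hc : c.PosSemidef := (ha.add hb).posSemidef.smul (Complex.zero_le_real.mpr (by norm_num))
  have key := hc.re_trace_mul_cfc_add_le (Real.concaveOn_rpow hs0.le hs1.le) ha.1 hb.1
    ha.posSemidef.spectrum_subset_Ici hb.posSemidef.spectrum_subset_Ici habc
  have hexpand : (a - b) * (mpow a s - mpow b s) =
      2 • (a * mpow a s) + 2 • (b * mpow b s) - 2 • (c * (mpow a s + mpow b s)) := by
    rw [← smul_mul_assoc 2 c, ← habc]; noncomm_ring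
  have hs : s + 1 ≠ 0 := by linarith
  unfold mpow at *
  rw [hexpand, ha.posSemidef.mul_cfc_rpow hs, hb.posSemidef.mul_cfc_rpow hs,
    ← hc.mul_cfc_rpow hs]
  simp only [two_smul, mul_add, trace_add, trace_sub, Complex.add_re, Complex.sub_re,
    RCLike.re_to_complex] at key ⊢
  linarith
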